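/- Let H be a real Hilbert space and let a, b be closed subspaces of H with a not contained in b. Then there exists a unit vector u ∈ a with u ∉ b such that the function s : C(H) → H defined by s(c) = P_c(u), where P_c is the orthogonal projection onto the closed subspace c, is an ℝH-state on the orthomodular lattice C(H) satisfying ‖s(a)‖ = 1 and ‖s(b)‖ < 1. Consequently, C(H) admits a strong set of ℝH-states. -/

import Mathlib

/-- A closed subspace of a real Hilbert space `H`: an element of `C(H)`. -/
def ClosedSubspace (H : Type*) [NormedAddCommGroup H] [InnerProductSpace ℝ H] : Type _ :=
  {K : Submodule ℝ H // IsClosed (K : Set H)}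

namespace ClosedSubspace

variable {H : Type*} [NormedAddCommGroup H] [InnerProductSpace ℝ H]

/-- The greatest element of `C(H)`: the whole space. -/
def top : ClosedSubspace H := ⟨⊤, by rw [Submodule.top_coe]; exact isClosed_univ⟩

/-- The join in `C(H)`: the topological closure of the subspace sum. -/
def sup (a b : ClosedSubspace H) : ClosedSubspace H :=
  ⟨(a.1 ⊔ b.1).topologicalClosure, Submodule.isClosed_topologicalClosure _⟩

/-- The orthocomplement in `C(H)`. -/
noncomputable def compl (a : ClosedSubspace H) : ClosedSubspace H :=
  ⟨a.1ᗮ, Submodule.isClosed_orthogonal _⟩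

/-- The partial order of `C(H)`: inclusion. -/
def le (a b : ClosedSubspace H) : Prop := a.1 ≤ b.1

/-- A real-Hilbert-space-valued (ℝH) state on the orthomodular lattice `C(H)`,
with values in `H` itself: `‖s(1)‖ = 1`, `s` is additive on orthogonal pairs,
and `s` sends orthogonal pairs to orthogonal vectors. -/
def IsRHState (s : ClosedSubspace H → H) : Prop :=
  ‖s top‖ = 1 ∧
    (∀ a b : ClosedSubspace H, le a (compl b) → s (sup a b) = s a + s b) ∧
    (∀ a b : ClosedSubspace H, le a (compl b) → inner ℝ (s a) (s b) = (0 : ℝ))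

variable [CompleteSpace H]

/-- The map `c ↦ P_c u`, where `P_c` is the orthogonal projection onto the
closed subspace `c`. -/
noncomputable def projState (u : H) (c : ClosedSubspace H) : H :=
  haveI : CompleteSpace c.1 := c.2.completeSpace_coe
  (c.1.orthogonalProjectionOnto u : H)

end ClosedSubspace

/-! For a unit vector `u`, the map `c ↦ P_c u` is an ℝH-state: when `c ⊥ d`, the vector
`P_c u + P_d u` lies in `c ⊔ d` and `u - (P_c u + P_d u)` is orthogonal to both `c` and `d`,
hence to their closed sum, so it is `P_{c ⊔ d} u`. Since `‖P_c u‖ < ‖u‖` unless `u ∈ c`,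
normalising a vector of `a \ b` gives a state that takes a unit value at `a` but not at `b`;
so any two closed subspaces with `c ≰ d` are separated by some state, and the set of all
ℝH-states is strong. -/

theorem Submodule.starProjection_topologicalClosure_sup_of_isOrtho {𝕜 E : Type*} [RCLike 𝕜]
    [NormedAddCommGroup E] [InnerProductSpace 𝕜 E] {K L : Submodule 𝕜 E}
    [K.HasOrthogonalProjection] [L.HasOrthogonalProjection]
    [(K ⊔ L).topologicalClosure.HasOrthogonalProjection] (h : K ⟂ L) (u : E) :
    (K ⊔ L).topologicalClosure.starProjection u = K.starProjection u + L.starProjection u := by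
  refine eq_starProjection_of_mem_orthogonal ((K ⊔ L).le_topologicalClosure
    (add_mem_sup (K.starProjection_apply_mem u) (L.starProjection_apply_mem u))) ?_
  rw [orthogonal_closure, ← inf_orthogonal]
  constructor
  · rw [← sub_sub]
    exact sub_mem (K.sub_starProjection_mem_orthogonal u) (h.ge (L.starProjection_apply_mem u))
  · rw [sub_add_eq_sub_sub_swap]
    exact sub_mem (L.sub_starProjection_mem_orthogonal u) (h.le (K.starProjection_apply_mem u))

namespace ClosedSubspace

variable {H : Type*} [NormedAddCommGroup H] [InnerProductSpace ℝ H]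

theorem exists_norm_eq_one_mem_notMem {a b : ClosedSubspace H} (hab : ¬ le a b) :
    ∃ u : H, ‖u‖ = 1 ∧ u ∈ a.1 ∧ u ∉ b.1 := by
  obtain ⟨v, hva, hvb⟩ := SetLike.not_le_iff_exists.1 hab
  have hv : v ≠ 0 := fun h => hvb (h ▸ b.1.zero_mem)
  have hc : (‖v‖⁻¹ : ℝ) ≠ 0 := inv_ne_zero (norm_ne_zero_iff.2 hv)
  exact ⟨(‖v‖⁻¹ : ℝ) • v, norm_smul_inv_norm hv, a.1.smul_mem _ hva,
    (b.1.smul_mem_iff hc).not.2 hvb⟩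

variable [CompleteSpace H]

instance (c : ClosedSubspace H) : CompleteSpace c.1 := c.2.completeSpace_coe

theorem projState_of_mem {u : H} {c : ClosedSubspace H} (hu : u ∈ c.1) : projState u c = u :=
  Submodule.starProjection_eq_self_iff.2 hu

theorem projState_sup_of_le_compl (u : H) {c d : ClosedSubspace H} (h : le c (compl d)) :
    projState u (sup c d) = projState u c + projState u d :=
  Submodule.starProjection_topologicalClosure_sup_of_isOrtho (Submodule.isOrtho_iff_le.2 h) u

theorem inner_projState_eq_zero_of_le_compl (u : H) {c d : ClosedSubspace H}
    (h : le c (compl d)) : inner ℝ (projState u c) (projState u d) = (0 : ℝ) :=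
  Submodule.inner_left_of_mem_orthogonal (d.1.starProjection_apply_mem u)
    (h (c.1.starProjection_apply_mem u))

theorem projState_isRHState {u : H} (hu : ‖u‖ = 1) : IsRHState (projState u) :=
  ⟨by rwa [projState_of_mem (c := top) Submodule.mem_top],
    fun _ _ => projState_sup_of_le_compl u, fun _ _ => inner_projState_eq_zero_of_le_compl u⟩

theorem norm_projState_lt {u : H} {c : ClosedSubspace H} (hu : u ∉ c.1) :
    ‖projState u c‖ < ‖u‖ :=
  (c.1.norm_starProjection_apply_le u).lt_of_ne
    (mt (c.1.mem_iff_norm_starProjection u).2 hu)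

theorem exists_projState_separating {a b : ClosedSubspace H} (hab : ¬ le a b) :
    ∃ u : H, ‖u‖ = 1 ∧ u ∈ a.1 ∧ u ∉ b.1 ∧
      IsRHState (projState u) ∧ ‖projState u a‖ = 1 ∧ ‖projState u b‖ < 1 := by
  obtain ⟨u, hu, hua, hub⟩ := exists_norm_eq_one_mem_notMem hab
  refine ⟨u, hu, hua, hub, projState_isRHState hu, ?_, hu ▸ norm_projState_lt hub⟩
  rw [projState_of_mem hua, hu]

end ClosedSubspace

open ClosedSubspace in
/-- If `a`, `b` are closed subspaces of a real Hilbert space `H` with `a` not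
contained in `b`, there is a unit vector `u ∈ a \ b` such that `s(c) = P_c u`
is an ℝH-state on `C(H)` with `‖s(a)‖ = 1` and `‖s(b)‖ < 1`. Consequently
`C(H)` admits a strong set of ℝH-states. -/
theorem stmt_19 {H : Type*} [NormedAddCommGroup H] [InnerProductSpace ℝ H] [CompleteSpace H]
    (a b : ClosedSubspace H) (hab : ¬ le a b) :
    (∃ u : H, ‖u‖ = 1 ∧ u ∈ a.1 ∧ u ∉ b.1 ∧
      IsRHState (projState u) ∧ ‖projState u a‖ = 1 ∧ ‖projState u b‖ < 1) ∧
    ∃ S : Set (ClosedSubspace H → H), S.Nonempty ∧ (∀ s ∈ S, IsRHState s) ∧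
      ∀ c d : ClosedSubspace H, ∃ s ∈ S, ((‖s c‖ = 1 → ‖s d‖ = 1) → le c d) := by
  obtain ⟨u, -, -, -, hu, -⟩ := exists_projState_separating hab
  refine ⟨exists_projState_separating hab, {s | IsRHState s}, ⟨projState u, hu⟩, fun _ hs => hs,
    fun c d => ?_⟩
  by_cases hcd : le c d
  · exact ⟨projState u, hu, fun _ => hcd⟩
  · obtain ⟨w, -, -, -, hw, hc, hd⟩ := exists_projState_separating hcd
    exact ⟨projState w, hw, fun himp => absurd (himp hc) hd.ne⟩
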